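/- Let a, c ∈ ℂ with Re a > 1/2 and c not a nonpositive integer, and let w ∈ (0,1). Then ∫_{−∞}^{∞} (1+t²)^{−a} · ₂F₁(a, a; c; w/(1+t²)) dt = √π · (Γ(a−1/2)/Γ(a)) · ₂F₁(a−1/2, a; c; w). -/

import Mathlib

/-!
Expand `₂F₁` in its power series. Since `(1+t²)^(-a) (w/(1+t²))ⁿ = wⁿ (1+t²)^(-(a+n))`, the
integral becomes `∑ₙ cₙ wⁿ ∫ (1+t²)^(-(a+n)) dt`; the interchange is justified by absolute
convergence, because `w < 1` lies inside the radius of convergence and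
`∫ (1+t²)^(-(Re a+n)) ≤ ∫ (1+t²)^(-Re a) < ∞`. The substitutions `t² = x` and `x = y/(1-y)` turn
`∫ (1+t²)^(-s) dt` into `B(1/2, s-1/2) = √π Γ(s-1/2)/Γ(s)`, and
`Γ(a+n-1/2)/Γ(a+n) = Γ(a-1/2)/Γ(a) · (a-1/2)ₙ/(a)ₙ` turns the coefficient `(a)ₙ(a)ₙ` into
`(a-1/2)ₙ(a)ₙ`.
-/

open Complex Real MeasureTheory

/-- The Gauss hypergeometric series `₂F₁(a,b;c;x) = ∑ₙ (a)ₙ(b)ₙ/((c)ₙ n!) xⁿ`. -/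
noncomputable def hyp2F1 (a b c x : ℂ) : ℂ :=
  ∑' n : ℕ, (ascPochhammer ℂ n).eval a * (ascPochhammer ℂ n).eval b /
    ((ascPochhammer ℂ n).eval c * (n.factorial : ℂ)) * x ^ n

open Set

theorem integral_eq_two_smul_integral_Ioi_of_even {E : Type*} [NormedAddCommGroup E]
    [NormedSpace ℝ E] {f : ℝ → E} (hf : Integrable f) (heven : ∀ x, f (-x) = f x) :
    ∫ x, f x = (2 : ℝ) • ∫ x in Ioi 0, f x := by
  have hIic : ∫ x in Iic 0, f x = ∫ x in Ioi 0, f x := by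
    rw [← neg_zero, ← integral_comp_neg_Ioi]
    simp only [heven, neg_zero]
  rw [← integral_add_compl measurableSet_Iic hf, compl_Iic, hIic, two_smul]

theorem image_div_one_sub_Ioo : (fun y : ℝ => y / (1 - y)) '' Ioo 0 1 = Ioi 0 := by
  ext x
  constructor
  · rintro ⟨y, ⟨hy0, hy1⟩, rfl⟩
    exact div_pos hy0 (sub_pos.mpr hy1)
  · intro hx
    have hx1 : (0 : ℝ) < 1 + x := by linarith [mem_Ioi.mp hx]
    refine ⟨x / (1 + x), ⟨div_pos hx hx1, (div_lt_one hx1).mpr (by linarith)⟩, ?_⟩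
    field_simp
    ring

theorem injOn_div_one_sub_Ioo : InjOn (fun y : ℝ => y / (1 - y)) (Ioo 0 1) := by
  intro y hy z hz h
  have hy1 : 1 - y ≠ 0 := (sub_pos.mpr hy.2).ne'
  have hz1 : 1 - z ≠ 0 := (sub_pos.mpr hz.2).ne'
  field_simp at h
  linarith

theorem hasDerivAt_div_one_sub {y : ℝ} (hy : y ≠ 1) :
    HasDerivAt (fun y : ℝ => y / (1 - y)) ((1 - y) ^ 2)⁻¹ y := by
  have hy1 : 1 - y ≠ 0 := sub_ne_zero.mpr hy.symm
  exact ((hasDerivAt_id' y).div ((hasDerivAt_id' y).const_sub 1) hy1).congr_deriv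
    (by field_simp; ring)

theorem betaIntegrand_div_one_sub {y : ℝ} (hy : y ∈ Ioo (0 : ℝ) 1) (u v : ℂ) :
    |((1 - y) ^ 2)⁻¹| •
        (((y / (1 - y) : ℝ) : ℂ) ^ (u - 1) * ((1 + y / (1 - y) : ℝ) : ℂ) ^ (-(u + v)))
      = (y : ℂ) ^ (u - 1) * (1 - (y : ℂ)) ^ (v - 1) := by
  obtain ⟨hy0, hy1⟩ := hy
  have hz : 0 < 1 - y := sub_pos.mpr hy1
  have hz0 : ((1 - y : ℝ) : ℂ) ≠ 0 := by exact_mod_cast hz.ne'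
  have hbase : 1 + y / (1 - y) = (1 - y)⁻¹ := by field_simp; ring
  have hsplit : ((1 - y : ℝ) : ℂ) ^ (u + v)
      = ((1 - y : ℝ) : ℂ) ^ (v - 1) * ((1 - y : ℝ) : ℂ) ^ (u - 1) * ((1 - y : ℝ) : ℂ) ^ 2 := by
    rw [← cpow_natCast, ← cpow_add _ _ hz0, ← cpow_add _ _ hz0]
    congr 1
    push_cast
    ring
  have hz' : 1 - (y : ℂ) = ((1 - y : ℝ) : ℂ) := by push_cast; ring
  rw [hz', hbase, ofReal_div, div_cpow_ofReal_nonneg hy0.le hz.le, ofReal_inv,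
    inv_cpow_ofReal_nonneg hz.le, cpow_neg, inv_inv, hsplit, abs_of_pos (by positivity),
    real_smul, ofReal_inv, ofReal_pow]
  have : ((1 - y : ℝ) : ℂ) ^ (u - 1) ≠ 0 := cpow_ne_zero_iff.mpr (Or.inl hz0)
  field_simp

-- No convergence hypotheses: outside `0 < re u, 0 < re v` both sides are the junk value `0`.
theorem integral_Ioi_cpow_mul_one_add_cpow_neg (u v : ℂ) :
    ∫ x in Ioi (0 : ℝ), (x : ℂ) ^ (u - 1) * ((1 + x : ℝ) : ℂ) ^ (-(u + v))
      = betaIntegral u v := by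
  rw [← image_div_one_sub_Ioo, integral_image_eq_integral_abs_deriv_smul measurableSet_Ioo
    (fun y hy => (hasDerivAt_div_one_sub hy.2.ne).hasDerivWithinAt) injOn_div_one_sub_Ioo,
    setIntegral_congr_fun measurableSet_Ioo fun y hy => betaIntegrand_div_one_sub hy u v,
    betaIntegral, intervalIntegral.integral_of_le zero_le_one, integral_Ioc_eq_integral_Ioo]

theorem re_sub_one_half (s : ℂ) : (s - 1 / 2).re = s.re - 1 / 2 := by
  norm_num

theorem lt_re_add_natCast {r : ℝ} {s : ℂ} (hs : r < s.re) (n : ℕ) : r < (s + n).re := by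
  rw [add_re, natCast_re]
  linarith [n.cast_nonneg (α := ℝ)]

theorem norm_ofReal_cpow_neg {x : ℝ} (hx : 0 < x) (s : ℂ) :
    ‖(x : ℂ) ^ (-s)‖ = x ^ (-s.re) := by
  rw [norm_cpow_eq_rpow_re_of_pos hx, neg_re]

theorem integrable_one_add_sq_rpow_neg {r : ℝ} (hr : 1 / 2 < r) :
    Integrable fun t : ℝ => (1 + t ^ 2) ^ (-r) := by
  have := integrable_rpow_neg_one_add_norm_sq (E := ℝ) (μ := volume) (r := 2 * r)
    (by rw [Module.finrank_self, Nat.cast_one]; linarith)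
  simpa [Real.norm_eq_abs, sq_abs, neg_div] using this

theorem integrable_one_add_sq_cpow_neg {s : ℂ} (hs : 1 / 2 < s.re) :
    Integrable fun t : ℝ => ((1 + t ^ 2 : ℝ) : ℂ) ^ (-s) := by
  refine (integrable_one_add_sq_rpow_neg hs).mono' ?_
    (.of_forall fun t => (norm_ofReal_cpow_neg (by positivity) s).le)
  refine (Continuous.cpow (by fun_prop) continuous_const fun t => ?_).aestronglyMeasurable
  exact ofReal_mem_slitPlane.mpr (by positivity)

theorem integral_one_add_sq_cpow_neg {s : ℂ} (hs : 1 / 2 < s.re) :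
    ∫ t : ℝ, ((1 + t ^ 2 : ℝ) : ℂ) ^ (-s) = √π * (Gamma (s - 1 / 2) / Gamma s) := by
  have hhalf : ∫ t in Ioi (0 : ℝ), ((1 + t ^ 2 : ℝ) : ℂ) ^ (-s)
      = (1 / 2 : ℂ) *
          ∫ x in Ioi (0 : ℝ), (x : ℂ) ^ (1 / 2 - 1 : ℂ) * ((1 + x : ℝ) : ℂ) ^ (-s) := by
    rw [← integral_comp_rpow_Ioi _ (p := 1 / 2) (by norm_num), ← integral_const_mul]
    refine setIntegral_congr_fun measurableSet_Ioi fun x (hx : 0 < x) => ?_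
    rw [← Real.rpow_natCast, ← Real.rpow_mul hx.le, real_smul, ofReal_mul,
      ofReal_cpow hx.le]
    norm_num [mul_assoc]
  have hGamma_half : Gamma (1 / 2 : ℂ) = √π := by
    rw [← Real.Gamma_one_half_eq, ← Complex.Gamma_ofReal]
    norm_num
  rw [integral_eq_two_smul_integral_Ioi_of_even (integrable_one_add_sq_cpow_neg hs)
      (fun t => by rw [neg_sq]), hhalf,
    show -s = -(1 / 2 + (s - 1 / 2)) by ring, integral_Ioi_cpow_mul_one_add_cpow_neg,
    betaIntegral_eq_Gamma_mul_div _ _ (by norm_num)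
      (by rw [re_sub_one_half]; linarith), hGamma_half,
    add_sub_cancel, real_smul]
  push_cast
  ring

theorem ne_neg_natCast_of_re_pos {z : ℂ} (hz : 0 < z.re) (k : ℕ) : z ≠ -k := by
  rintro rfl
  exact (Nat.cast_nonneg (α := ℝ) k).not_gt (by simpa using hz)

theorem ascPochhammer_eval_ne_zero_of_re_pos {z : ℂ} (hz : 0 < z.re) (n : ℕ) :
    (ascPochhammer ℂ n).eval z ≠ 0 := by
  rw [Ne, ascPochhammer_eval_eq_zero_iff]
  rintro ⟨k, -, hk⟩
  exact ne_neg_natCast_of_re_pos hz k (by rw [hk, neg_neg])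

theorem Gamma_add_nat_div_Gamma_add_nat {z z' : ℂ} (hz : 0 < z.re) (hz' : 0 < z'.re) (n : ℕ) :
    Gamma (z + n) / Gamma (z' + n)
      = Gamma z / Gamma z' * ((ascPochhammer ℂ n).eval z / (ascPochhammer ℂ n).eval z') := by
  rw [← Gamma_add_nat_div_Gamma_eq z (ne_neg_natCast_of_re_pos hz),
    ← Gamma_add_nat_div_Gamma_eq z' (ne_neg_natCast_of_re_pos hz')]
  have := Gamma_ne_zero_of_re_pos hz
  have := Gamma_ne_zero_of_re_pos hz'
  field_simp

theorem hyp2F1_eq_tsum (a b c x : ℂ) :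
    hyp2F1 a b c x = ∑' n, ordinaryHypergeometricCoefficient a b c n * x ^ n :=
  tsum_congr fun n => by ring

theorem one_le_radius_ordinaryHypergeometricSeries {𝕂 : Type*} (𝔸 : Type*) [RCLike 𝕂]
    [NormedDivisionRing 𝔸] [NormedAlgebra 𝕂 𝔸] (a b c : 𝕂) :
    1 ≤ (ordinaryHypergeometricSeries 𝔸 a b c).radius := by
  by_cases h : ∃ k : ℕ, (k : 𝕂) = -a ∨ (k : 𝕂) = -b ∨ (k : 𝕂) = -c
  · obtain ⟨k, hk | hk | hk⟩ := h <;> rw [eq_comm, neg_eq_iff_eq_neg] at hk <;> subst hk <;>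
      simp only [ordinaryHypergeometric_radius_top_of_neg_nat₁,
        ordinaryHypergeometric_radius_top_of_neg_nat₂,
        ordinaryHypergeometric_radius_top_of_neg_nat₃, le_top]
  · push Not at h
    exact (ordinaryHypergeometricSeries_radius_eq_one 𝔸 a b c h).ge

theorem summable_norm_ordinaryHypergeometricCoefficient_mul_pow (a b c : ℂ) {r : ℝ}
    (hr0 : 0 ≤ r) (hr1 : r < 1) :
    Summable fun n => ‖ordinaryHypergeometricCoefficient a b c n‖ * r ^ n := by
  have hmem : (r : ℂ) ∈ Metric.eball (0 : ℂ) (ordinaryHypergeometricSeries ℂ a b c).radius := by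
    refine mem_eball_zero_iff.mpr
      (lt_of_lt_of_le ?_ (one_le_radius_ordinaryHypergeometricSeries ℂ a b c))
    rw [← ofReal_norm, Complex.norm_real, Real.norm_of_nonneg hr0]
    exact ENNReal.ofReal_lt_one.mpr hr1
  refine ((ordinaryHypergeometricSeries ℂ a b c).summable_norm_apply hmem).congr fun n => ?_
  rw [ordinaryHypergeometricSeries_apply_eq, norm_smul, norm_pow, Complex.norm_real,
    Real.norm_of_nonneg hr0]

theorem ordinaryHypergeometricCoefficient_mul_integral_one_add_sq_cpow_neg_add_nat {a : ℂ}
    (ha : 1 / 2 < a.re) (c : ℂ) (n : ℕ) :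
    ordinaryHypergeometricCoefficient a a c n * ∫ t : ℝ, ((1 + t ^ 2 : ℝ) : ℂ) ^ (-(a + n))
      = √π * (Gamma (a - 1 / 2) / Gamma a) *
          ordinaryHypergeometricCoefficient (a - 1 / 2) a c n := by
  have ha0 : 0 < a.re := by linarith
  have ha' : 0 < (a - 1 / 2).re := by rw [re_sub_one_half]; linarith
  rw [integral_one_add_sq_cpow_neg (lt_re_add_natCast ha n), add_sub_right_comm,
    Gamma_add_nat_div_Gamma_add_nat ha' ha0]
  have := ascPochhammer_eval_ne_zero_of_re_pos ha0 n
  simp only [ordinaryHypergeometricCoefficient]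
  field_simp

theorem summable_integral_norm_mul_one_add_sq_cpow_neg {s : ℂ} (hs : 1 / 2 < s.re) {b : ℕ → ℂ}
    (hb : Summable fun n => ‖b n‖) :
    Summable fun n : ℕ => ∫ t : ℝ, ‖b n * ((1 + t ^ 2 : ℝ) : ℂ) ^ (-(s + n))‖ := by
  refine .of_nonneg_of_le (fun n => integral_nonneg fun t => norm_nonneg _) (fun n => ?_)
    (hb.mul_right (∫ t : ℝ, (1 + t ^ 2) ^ (-s.re)))
  simp only [norm_mul]
  rw [integral_const_mul]
  refine mul_le_mul_of_nonneg_left (integral_mono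
    (integrable_one_add_sq_cpow_neg (lt_re_add_natCast hs n)).norm
    (integrable_one_add_sq_rpow_neg hs) fun t => ?_) (norm_nonneg _)
  rw [norm_ofReal_cpow_neg (by positivity)]
  exact Real.rpow_le_rpow_of_exponent_le (by nlinarith) (by simp)

theorem ofReal_cpow_neg_mul_ofReal_div_pow {r : ℝ} (hr : 0 < r) (s : ℂ) (x : ℝ) (n : ℕ) :
    (r : ℂ) ^ (-s) * ((x / r : ℝ) : ℂ) ^ n = (x : ℂ) ^ n * (r : ℂ) ^ (-(s + n)) := by
  have hr0 : (r : ℂ) ≠ 0 := by exact_mod_cast hr.ne'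
  rw [ofReal_div, div_pow, neg_add, cpow_add _ _ hr0, cpow_neg _ (n : ℂ), cpow_natCast]
  field_simp

theorem integral_hyp2F1_general (a c : ℂ) (ha : 1 / 2 < a.re)
    (w : ℝ) (hw : w ∈ Set.Ioo (0 : ℝ) 1) :
    ∫ t : ℝ, ((1 + t ^ 2 : ℝ) : ℂ) ^ (-a) *
        hyp2F1 a a c ((w / (1 + t ^ 2) : ℝ) : ℂ)
      = (Real.sqrt Real.pi : ℂ) * (Complex.Gamma (a - 1 / 2) / Complex.Gamma a) *
          hyp2F1 (a - 1 / 2) a c (w : ℂ) := by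
  set b : ℕ → ℂ := fun n => ordinaryHypergeometricCoefficient a a c n * (w : ℂ) ^ n
  set F : ℕ → ℝ → ℂ := fun n t => b n * ((1 + t ^ 2 : ℝ) : ℂ) ^ (-(a + n))
  have hF_int (n : ℕ) : Integrable (F n) :=
    (integrable_one_add_sq_cpow_neg (lt_re_add_natCast ha n)).const_mul (b n)
  have hb : Summable fun n => ‖b n‖ := by
    simpa [b, norm_mul, Complex.norm_real, abs_of_pos hw.1] using
      summable_norm_ordinaryHypergeometricCoefficient_mul_pow a a c hw.1.le hw.2
  calc _ = ∫ t : ℝ, ∑' n, F n t := by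
        refine integral_congr_ae (.of_forall fun t => ?_)
        simp only [F, b, hyp2F1_eq_tsum, ← tsum_mul_left]
        refine tsum_congr fun n => ?_
        rw [mul_left_comm, ofReal_cpow_neg_mul_ofReal_div_pow (by positivity)]
        ring
    _ = ∑' n, ∫ t : ℝ, F n t :=
        (integral_tsum_of_summable_integral_norm hF_int
          (summable_integral_norm_mul_one_add_sq_cpow_neg ha hb)).symm
    _ = _ := by
        simp only [F, b, integral_const_mul, hyp2F1_eq_tsum, ← tsum_mul_left]
        refine tsum_congr fun n => ?_
        rw [mul_right_comm,
          ordinaryHypergeometricCoefficient_mul_integral_one_add_sq_cpow_neg_add_nat ha]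
        ring

/-- `∫_{−∞}^{∞} (1+t²)^{−a} ₂F₁(a,a;c;w/(1+t²)) dt
     = √π · (Γ(a−1/2)/Γ(a)) · ₂F₁(a−1/2,a;c;w)`. -/
theorem integral_hyp2F1 (a c : ℂ) (ha : 1 / 2 < a.re)
    (hc : ∀ n : ℕ, c ≠ -(n : ℂ)) (w : ℝ) (hw : w ∈ Set.Ioo (0 : ℝ) 1) :
    ∫ t : ℝ, ((1 + t ^ 2 : ℝ) : ℂ) ^ (-a) *
        hyp2F1 a a c ((w / (1 + t ^ 2) : ℝ) : ℂ)
      = (Real.sqrt Real.pi : ℂ) * (Complex.Gamma (a - 1 / 2) / Complex.Gamma a) *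
          hyp2F1 (a - 1 / 2) a c (w : ℂ) :=
  integral_hyp2F1_general a c ha w hw
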